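/- Buzano-type bound for frame coefficients: If {τ_j}_{j=1}^n and {ω_k}_{k=1}^m are 1-bounded Parseval frames of a finite-dimensional Hilbert space H, then for every unit vector h, max_j |⟨h, τ_j⟩| · max_k |⟨h, ω_k⟩| ≤ (1 + max_{j,k} |⟨τ_j, ω_k⟩|)/2. -/

import Mathlib

/-! Reflecting `‖x‖² u` in the line `𝕜 ∙ x` preserves its norm `‖x‖² ‖u‖` and turns its inner
product with `v` into `2 ⟪u, x⟫ ⟪x, v⟫ - ‖x‖² ⟪u, v⟫`; Cauchy–Schwarz for the reflected vector is
Buzano's inequality. For a unit vector `h` and 1-bounded vectors `τ j`, `ω k` it bounds each product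
`|⟪h, τ j⟫| |⟪h, ω k⟫|` by `(1 + |⟪τ j, ω k⟫|) / 2`, and the bound passes to the suprema. -/

open scoped InnerProductSpace

section Buzano

variable {𝕜 E : Type*} [RCLike 𝕜] [NormedAddCommGroup E] [InnerProductSpace 𝕜 E]

theorem inner_reflection_singleton_smul_left (x u v : E) :
    ⟪(𝕜 ∙ x).reflection (((‖x‖ : 𝕜) ^ 2) • u), v⟫_𝕜 =
      2 * ⟪u, x⟫_𝕜 * ⟪x, v⟫_𝕜 - (‖x‖ : 𝕜) ^ 2 * ⟪u, v⟫_𝕜 := by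
  rw [Submodule.reflection_apply, map_smul, ← RCLike.ofReal_pow,
    Submodule.smul_starProjection_singleton,
    inner_sub_left, two_smul, inner_add_left, inner_smul_left, inner_smul_left, inner_conj_symm]
  simp only [RCLike.conj_ofReal]
  ring

/-- Buzano's inequality. -/
theorem norm_inner_mul_norm_inner_le (x u v : E) :
    ‖⟪u, x⟫_𝕜‖ * ‖⟪x, v⟫_𝕜‖ ≤ ‖x‖ ^ 2 * (‖u‖ * ‖v‖ + ‖⟪u, v⟫_𝕜‖) / 2 := by
  set R := (𝕜 ∙ x).reflection (((‖x‖ : 𝕜) ^ 2) • u)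
  have hR : ‖⟪R, v⟫_𝕜‖ ≤ ‖x‖ ^ 2 * ‖u‖ * ‖v‖ := by
    calc ‖⟪R, v⟫_𝕜‖ ≤ ‖R‖ * ‖v‖ := norm_inner_le_norm R v
      _ = ‖x‖ ^ 2 * ‖u‖ * ‖v‖ := by
        rw [LinearIsometryEquiv.norm_map, norm_smul, norm_pow, RCLike.norm_ofReal, abs_norm]
  have key : 2 * ⟪u, x⟫_𝕜 * ⟪x, v⟫_𝕜 = ⟪R, v⟫_𝕜 + (‖x‖ : 𝕜) ^ 2 * ⟪u, v⟫_𝕜 := by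
    rw [inner_reflection_singleton_smul_left]
    ring
  have hdouble : 2 * (‖⟪u, x⟫_𝕜‖ * ‖⟪x, v⟫_𝕜‖) ≤ ‖⟪R, v⟫_𝕜‖ + ‖x‖ ^ 2 * ‖⟪u, v⟫_𝕜‖ := by
    calc 2 * (‖⟪u, x⟫_𝕜‖ * ‖⟪x, v⟫_𝕜‖) = ‖2 * ⟪u, x⟫_𝕜 * ⟪x, v⟫_𝕜‖ := by
          rw [norm_mul, norm_mul, RCLike.norm_two, mul_assoc]
      _ ≤ ‖⟪R, v⟫_𝕜‖ + ‖x‖ ^ 2 * ‖⟪u, v⟫_𝕜‖ := by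
        rw [key]
        refine (norm_add_le _ _).trans_eq ?_
        rw [norm_mul, norm_pow, RCLike.norm_ofReal, abs_norm]
  linarith

end Buzano

theorem Real.iSup_mul_iSup_le {ι κ : Sort*} {f : ι → ℝ} {g : κ → ℝ} {a : ℝ}
    (hf : ∀ i, 0 ≤ f i) (hg : ∀ j, 0 ≤ g j) (ha : 0 ≤ a) (h : ∀ i j, f i * g j ≤ a) :
    (⨆ i, f i) * (⨆ j, g j) ≤ a := by
  rw [Real.iSup_mul_of_nonneg (Real.iSup_nonneg hg)]
  refine Real.iSup_le (fun i => ?_) ha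
  rw [Real.mul_iSup_of_nonneg (hf i)]
  exact Real.iSup_le (h i) ha

theorem buzano_frame_coefficients_general {𝕜 H : Type*} [RCLike 𝕜] [NormedAddCommGroup H]
    [InnerProductSpace 𝕜 H]
    {n m : ℕ}
    (τ : Fin n → H) (ω : Fin m → H)
    (hτ1 : ∀ j, ‖τ j‖ ≤ 1) (hω1 : ∀ k, ‖ω k‖ ≤ 1)
    (h : H) (hh : ‖h‖ = 1) :
    (⨆ j, ‖(inner 𝕜 h (τ j) : 𝕜)‖) * (⨆ k, ‖(inner 𝕜 h (ω k) : 𝕜)‖) ≤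
      (1 + ⨆ j, ⨆ k, ‖(inner 𝕜 (τ j) (ω k) : 𝕜)‖) / 2 := by
  have hsup_nonneg : 0 ≤ ⨆ j, ⨆ k, ‖⟪τ j, ω k⟫_𝕜‖ :=
    Real.iSup_nonneg fun _ => Real.iSup_nonneg fun _ => norm_nonneg _
  refine Real.iSup_mul_iSup_le (fun _ => norm_nonneg _) (fun _ => norm_nonneg _)
    (by positivity) fun j k => ?_
  have hentry : ‖⟪τ j, ω k⟫_𝕜‖ ≤ ⨆ j, ⨆ k, ‖⟪τ j, ω k⟫_𝕜‖ :=
    le_ciSup_of_le (Finite.bddAbove_range _) j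
      (le_ciSup (f := fun k => ‖⟪τ j, ω k⟫_𝕜‖) (Finite.bddAbove_range _) k)
  calc ‖⟪h, τ j⟫_𝕜‖ * ‖⟪h, ω k⟫_𝕜‖ = ‖⟪τ j, h⟫_𝕜‖ * ‖⟪h, ω k⟫_𝕜‖ := by rw [norm_inner_symm]
    _ ≤ ‖h‖ ^ 2 * (‖τ j‖ * ‖ω k‖ + ‖⟪τ j, ω k⟫_𝕜‖) / 2 := norm_inner_mul_norm_inner_le h _ _
    _ ≤ (1 + ⨆ j, ⨆ k, ‖⟪τ j, ω k⟫_𝕜‖) / 2 := by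
      rw [hh, one_pow, one_mul]
      gcongr
      exact mul_le_one₀ (hτ1 j) (norm_nonneg _) (hω1 k)

theorem buzano_frame_coefficients {𝕜 H : Type*} [RCLike 𝕜] [NormedAddCommGroup H]
    [InnerProductSpace 𝕜 H] [FiniteDimensional 𝕜 H]
    {n m : ℕ} (hn : 0 < n) (hm : 0 < m)
    (τ : Fin n → H) (ω : Fin m → H)
    (hτ : ∀ x : H, ‖x‖ ^ 2 = ∑ j, ‖(inner 𝕜 x (τ j) : 𝕜)‖ ^ 2)
    (hω : ∀ x : H, ‖x‖ ^ 2 = ∑ k, ‖(inner 𝕜 x (ω k) : 𝕜)‖ ^ 2)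
    (hτ1 : ∀ j, ‖τ j‖ ≤ 1) (hω1 : ∀ k, ‖ω k‖ ≤ 1)
    (h : H) (hh : ‖h‖ = 1) :
    (⨆ j, ‖(inner 𝕜 h (τ j) : 𝕜)‖) * (⨆ k, ‖(inner 𝕜 h (ω k) : 𝕜)‖) ≤
      (1 + ⨆ j, ⨆ k, ‖(inner 𝕜 (τ j) (ω k) : 𝕜)‖) / 2 :=
  buzano_frame_coefficients_general τ ω hτ1 hω1 h hh
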